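/- arXiv:1909.06128 — 5 statements merged into one kernel-verified Lean document; each statement's English description precedes it below -/
import Mathlib

section
/- For every function u in C_c^∞(ℝ) (smooth compactly supported on the real line) with u(0)=0, the Hardy inequality ∫_ℝ |u(x)|²/x² dx ≤ 4 ∫_ℝ |u'(x)|² dx holds. -/
open MeasureTheory Set Filter

set_option maxHeartbeats 800000 in
/-- One-dimensional Hardy inequality: for `u` smooth with compact support on `ℝ`
with `u 0 = 0`, `∫ |u|²/x² ≤ 4 ∫ |u'|²`. -/
theorem hardy_dim_one (u : ℝ → ℝ) (hu : ContDiff ℝ (⊤ : ℕ∞) u) (hsupp : HasCompactSupport u)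
    (h0 : u 0 = 0) :
    ∫ x : ℝ, (u x) ^ 2 / x ^ 2 ≤ 4 * ∫ x : ℝ, (deriv u x) ^ 2 := by
  set w : ℝ → ℝ := deriv u with hw_def
  have hu_cont : Continuous u := hu.continuous
  have hu_diff : Differentiable ℝ u := hu.differentiable (by simp)
  have hw_cont : Continuous w := hu.continuous_deriv (by simp)
  have hw_supp : HasCompactSupport w := hsupp.deriv
  obtain ⟨M₀, hM₀⟩ := hw_supp.exists_bound_of_continuous hw_cont
  set M : ℝ := max M₀ 0 with hM_def
  have hM0 : 0 ≤ M := le_max_right _ _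
  have hM : ∀ x, |w x| ≤ M := fun x => le_trans (hM₀ x) (le_max_left _ _)
  have hLip : ∀ x : ℝ, |u x| ≤ M * |x| := by
    intro x
    have := Convex.norm_image_sub_le_of_norm_deriv_le
      (f := u) (C := M) (s := univ) (fun y _ => hu_diff y) (fun y _ => hM y)
      convex_univ (mem_univ 0) (mem_univ x)
    simpa [h0] using this
  have hdivx : ∀ x : ℝ, |u x / x| ≤ M := by
    intro x
    rcases eq_or_ne x 0 with rfl | hx
    · simpa using hM0
    · rw [abs_div, div_le_iff₀ (abs_pos.mpr hx)]
      exact hLip x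
  set f₁ : ℝ → ℝ := fun x => u x ^ 2 / x ^ 2 with hf₁_def
  set g : ℝ → ℝ := fun x => -(u x ^ 2) / x with hg_def
  set G : ℝ → ℝ := fun x => u x ^ 2 / x ^ 2 - 2 * u x * w x / x with hG_def
  have hg0 : g 0 = 0 := by simp [hg_def, h0]
  have hf₁_eq : ∀ x, f₁ x = (u x / x) ^ 2 := by
    intro x; simp only [hf₁_def, div_pow]
  have hG_eq : ∀ x, G x = (u x / x) ^ 2 - 2 * (u x / x) * w x := by
    intro x; simp only [hG_def, div_pow, div_eq_mul_inv]; ring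
  have hf₁_meas : AEStronglyMeasurable f₁ (volume : Measure ℝ) := by
    apply Measurable.aestronglyMeasurable
    exact ((hu_cont.pow 2).measurable).div ((continuous_pow 2).measurable)
  have hG_meas : AEStronglyMeasurable G (volume : Measure ℝ) := by
    apply Measurable.aestronglyMeasurable
    exact (((hu_cont.pow 2).measurable).div ((continuous_pow 2).measurable)).sub
      ((((continuous_const.mul hu_cont).mul hw_cont).measurable).div measurable_id)
  have hK : IsCompact (tsupport u) := hsupp
  have hzero : ∀ x, x ∉ tsupport u → u x = 0 := fun x hx => image_eq_zero_of_notMem_tsupport hx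
  have hind : Integrable ((tsupport u).indicator fun _ : ℝ => (3 : ℝ) * M ^ 2) volume := by
    rw [integrable_indicator_iff hK.measurableSet]
    exact integrableOn_const hK.measure_lt_top.ne
  have hf₁_int : Integrable f₁ (volume : Measure ℝ) := by
    apply hind.mono' hf₁_meas
    filter_upwards with x
    by_cases hx : x ∈ tsupport u
    · rw [indicator_of_mem hx, hf₁_eq x, Real.norm_eq_abs, abs_of_nonneg (sq_nonneg _)]
      have h1 := hdivx x
      nlinarith [abs_nonneg (u x / x), sq_abs (u x / x)]
    · rw [indicator_of_notMem hx]
      simp [hf₁_eq x, hzero x hx]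
  have hG_int : Integrable G (volume : Measure ℝ) := by
    apply hind.mono' hG_meas
    filter_upwards with x
    by_cases hx : x ∈ tsupport u
    · rw [indicator_of_mem hx, hG_eq x, Real.norm_eq_abs]
      have h1 := hdivx x
      have h2 := hM x
      have h3 : |(u x / x) ^ 2 - 2 * (u x / x) * w x| ≤ |u x / x| ^ 2 + 2 * (|u x / x| * |w x|) := by
        refine (abs_sub _ _).trans ?_
        rw [abs_pow, abs_mul, abs_mul, abs_two]
        exact le_of_eq (by ring)
      refine h3.trans ?_
      nlinarith [abs_nonneg (w x), abs_nonneg (u x / x)]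
    · rw [indicator_of_notMem hx]
      simp [hG_eq x, hzero x hx]
  have hw2_int : Integrable (fun x => w x ^ 2) (volume : Measure ℝ) := by
    apply (hw_cont.pow 2).integrable_of_hasCompactSupport
    exact hw_supp.comp_left (g := fun t : ℝ => t ^ 2) (zero_pow two_ne_zero)
  have hg_deriv : ∀ x : ℝ, x ≠ 0 → HasDerivAt g (G x) x := by
    intro x hx
    have h1 := ((hu_diff x).hasDerivAt.fun_pow 2).fun_neg
    have h3 := h1.fun_div (hasDerivAt_id x) hx
    rw [hg_def]
    refine h3.congr_deriv ?_
    simp only [hG_def, id, hw_def]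
    field_simp
    ring
  have hg_cont0 : ContinuousAt g 0 := by
    rw [ContinuousAt, hg0]
    apply squeeze_zero_norm (a := fun x => M ^ 2 * |x|)
    · intro x
      rcases eq_or_ne x 0 with rfl | hx
      · simp [hg0, sq_nonneg]
      · have hgx : g x = -((u x / x) ^ 2 * x) := by
          simp only [hg_def]; field_simp
        rw [Real.norm_eq_abs, hgx, abs_neg, abs_mul, abs_pow]
        have h1 := hdivx x
        have h2 := abs_nonneg (u x / x)
        have h4 : |u x / x| ^ 2 ≤ M ^ 2 := by nlinarith
        have h5 := mul_le_mul_of_nonneg_right h4 (abs_nonneg x)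
        linarith
    · have : Tendsto (fun x : ℝ => M ^ 2 * |x|) (nhds 0) (nhds (M ^ 2 * |(0 : ℝ)|)) :=
        (continuous_const.mul continuous_abs).tendsto 0
      simpa using this
  obtain ⟨R, hR⟩ := hK.bddAbove
  obtain ⟨R', hR'⟩ := hK.bddBelow
  have hg_top : Tendsto g atTop (nhds 0) := by
    have hev : (fun _ : ℝ => (0 : ℝ)) =ᶠ[atTop] g := by
      filter_upwards [eventually_gt_atTop R] with x hx
      have hxK : x ∉ tsupport u := fun h => absurd (hR h) (not_le.mpr hx)
      simp [hg_def, hzero x hxK]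
    exact tendsto_const_nhds.congr' hev
  have hg_bot : Tendsto g atBot (nhds 0) := by
    have hev : (fun _ : ℝ => (0 : ℝ)) =ᶠ[atBot] g := by
      filter_upwards [eventually_lt_atBot R'] with x hx
      have hxK : x ∉ tsupport u := fun h => absurd (hR' h) (not_le.mpr hx)
      simp [hg_def, hzero x hxK]
    exact tendsto_const_nhds.congr' hev
  have hIoiG : ∫ x in Ioi (0 : ℝ), G x = 0 := by
    have := integral_Ioi_of_hasDerivAt_of_tendsto (a := 0) (f := g) (f' := G) (m := 0)
      hg_cont0.continuousWithinAt (fun x hx => hg_deriv x (ne_of_gt hx))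
      hG_int.integrableOn hg_top
    simpa [hg0] using this
  have hIicG : ∫ x in Iic (0 : ℝ), G x = 0 := by
    have := integral_Iic_of_hasDerivAt_of_tendsto (a := 0) (f := g) (f' := G) (m := 0)
      hg_cont0.continuousWithinAt (fun x hx => hg_deriv x (ne_of_lt hx))
      hG_int.integrableOn hg_bot
    simpa [hg0] using this
  have hpt : ∀ x : ℝ, f₁ x ≤ 2 * G x + 4 * w x ^ 2 := by
    intro x
    rw [hf₁_eq, hG_eq]
    nlinarith [sq_nonneg (u x / x - 2 * w x)]
  have hRHS_int : Integrable (fun x => 2 * G x + 4 * w x ^ 2) (volume : Measure ℝ) :=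
    (hG_int.const_mul 2).add (hw2_int.const_mul 4)
  have key : ∀ s : Set ℝ, (∫ x in s, G x) = 0 →
      (∫ x in s, f₁ x) ≤ 4 * ∫ x in s, w x ^ 2 := by
    intro s hs
    calc (∫ x in s, f₁ x) ≤ ∫ x in s, (2 * G x + 4 * w x ^ 2) :=
          integral_mono hf₁_int.integrableOn hRHS_int.integrableOn hpt
      _ = 2 * (∫ x in s, G x) + 4 * ∫ x in s, w x ^ 2 := by
          rw [integral_add ((hG_int.integrableOn).const_mul 2)
            ((hw2_int.integrableOn).const_mul 4), integral_const_mul, integral_const_mul]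
      _ = 4 * ∫ x in s, w x ^ 2 := by rw [hs]; ring
  have split1 : (∫ x : ℝ, f₁ x) = (∫ x in Iic (0 : ℝ), f₁ x) + ∫ x in Ioi (0 : ℝ), f₁ x := by
    rw [← integral_add_compl measurableSet_Iic hf₁_int, compl_Iic]
  have split2 : (∫ x : ℝ, w x ^ 2) = (∫ x in Iic (0 : ℝ), w x ^ 2) + ∫ x in Ioi (0 : ℝ), w x ^ 2 := by
    rw [← integral_add_compl measurableSet_Iic hw2_int, compl_Iic]
  have goal' : (∫ x : ℝ, f₁ x) ≤ 4 * ∫ x : ℝ, w x ^ 2 := by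
    rw [split1, split2]
    have h1 := key _ hIicG
    have h2 := key _ hIoiG
    linarith
  exact goal'
end

section
/- For every function u in C_c^∞(ℝ^d) with d ≥ 3, the Hardy inequality ∫ |u(x)|²/|x|² dx ≤ (4/(d-2)²) ∫ |∇u(x)|² dx holds. -/
open MeasureTheory Set Metric
open scoped ENNReal

lemma polar_lintegral {E : Type*} [NormedAddCommGroup E] [NormedSpace ℝ E]
    [MeasurableSpace E] [BorelSpace E] [FiniteDimensional ℝ E] [Nontrivial E]
    (μ : Measure E) [μ.IsAddHaarMeasure] (g : E → ℝ≥0∞) (hg : Measurable g) :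
    ∫⁻ x, g x ∂μ = ∫⁻ ω : sphere (0:E) 1, ∫⁻ r in Ioi (0:ℝ),
      ENNReal.ofReal (r ^ (Module.finrank ℝ E - 1)) * g (r • ω.1) ∂volume ∂μ.toSphere := by
  have hh : Measurable (fun p : sphere (0:E) 1 × Ioi (0:ℝ) => g (p.2.1 • p.1.1)) :=
    hg.comp (by fun_prop)
  calc ∫⁻ x, g x ∂μ = ∫⁻ x : ({(0:E)}ᶜ : Set E), g x.1 ∂(μ.comap (↑)) := by
        rw [lintegral_subtype_comap (measurableSet_singleton _).compl,
          restrict_compl_singleton]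
    _ = ∫⁻ p : sphere (0:E) 1 × Ioi (0:ℝ), g (p.2.1 • p.1.1)
          ∂(μ.toSphere.prod (.volumeIoiPow (Module.finrank ℝ E - 1))) := by
        rw [← (μ.measurePreserving_homeomorphUnitSphereProd).lintegral_comp hh]
        refine lintegral_congr fun x => ?_
        simp [homeomorphUnitSphereProd, smul_inv_smul₀ (norm_ne_zero_iff.2 x.2)]
    _ = _ := by
        rw [lintegral_prod _ hh.aemeasurable]
        refine lintegral_congr fun ω => ?_
        have hgr : Measurable (fun y : Ioi (0:ℝ) => g (y.1 • ω.1)) := hg.comp (by fun_prop)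
        rw [Measure.volumeIoiPow, lintegral_withDensity_eq_lintegral_mul _
          (by fun_prop) hgr]
        simp only [Pi.mul_apply]
        exact lintegral_subtype_comap measurableSet_Ioi
          (fun r => ENNReal.ofReal (r ^ (Module.finrank ℝ E - 1)) * g (r • ω.1))
lemma hardy_1d (d : ℕ) (hd : 3 ≤ d) (f : ℝ → ℝ) (hf : ContDiff ℝ (⊤ : ℕ∞) f)
    (R : ℝ) (hR : 0 < R) (hz : ∀ r, R ≤ r → f r = 0) :
    ∫⁻ r in Ioi (0:ℝ), ENNReal.ofReal (r ^ (d-3) * f r ^ 2) ≤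
      ENNReal.ofReal (4 / ((d:ℝ)-2)^2) *
        ∫⁻ r in Ioi (0:ℝ), ENNReal.ofReal (r ^ (d-1) * (deriv f r) ^ 2) := by
  have hdc : (0:ℝ) < (d:ℝ) - 2 := by
    have : (3:ℝ) ≤ (d:ℝ) := by exact_mod_cast hd
    linarith
  set c : ℝ := (d:ℝ) - 2 with hc
  set t : ℝ := c / 2 with htdef
  have ht : 0 < t := by positivity
  have hfc : Continuous f := hf.continuous
  have hdfc : Continuous (deriv f) := hf.continuous_deriv (by simp)
  set A : ℝ := ∫ r in (0:ℝ)..R, r ^ (d-3) * f r ^ 2 with hA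
  set B : ℝ := ∫ r in (0:ℝ)..R, r ^ (d-1) * (deriv f r) ^ 2 with hB
  have hA0 : 0 ≤ A := intervalIntegral.integral_nonneg hR.le
    (fun r hr => by have h0 := hr.1; positivity)
  have hB0 : 0 ≤ B := intervalIntegral.integral_nonneg hR.le
    (fun r hr => by have h0 := hr.1; positivity)
  -- FTC / integration by parts
  have key : ∀ r : ℝ, HasDerivAt (fun s => s ^ (d-2) * f s ^ 2)
      (c * (r ^ (d-3) * f r ^ 2) + r ^ (d-2) * (2 * f r * deriv f r)) r := by
    intro r
    have h1 : HasDerivAt (fun s : ℝ => s ^ (d-2)) (((d-2 : ℕ) : ℝ) * r ^ (d-3)) r := by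
      simpa [show d-2-1 = d-3 by omega] using hasDerivAt_pow (d-2) r
    have h2 : HasDerivAt (fun s => f s ^ 2) (2 * f r ^ 1 * deriv f r) r :=
      ((hf.differentiable (by simp)).differentiableAt.hasDerivAt).pow 2
    have h3 := h1.mul h2
    refine h3.congr_deriv ?_
    have : ((d-2:ℕ):ℝ) = c := by
      rw [hc]; push_cast [Nat.cast_sub (by omega : 2 ≤ d)]; ring
    rw [this]; ring
  have hcont1 : Continuous fun r : ℝ => c * (r ^ (d-3) * f r ^ 2) := by fun_prop
  have hcont2 : Continuous fun r : ℝ => r ^ (d-2) * (2 * f r * deriv f r) := by fun_prop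
  have hFTC := intervalIntegral.integral_eq_sub_of_hasDerivAt (fun r _ => key r)
    ((hcont1.add hcont2).intervalIntegrable 0 R)
  rw [hz R le_rfl, zero_pow (by omega : d - 2 ≠ 0)] at hFTC
  have hsplit : c * A + (∫ r in (0:ℝ)..R, r ^ (d-2) * (2 * f r * deriv f r)) = 0 := by
    rw [hA, ← intervalIntegral.integral_const_mul,
      ← intervalIntegral.integral_add (hcont1.intervalIntegrable 0 R)
        (hcont2.intervalIntegrable 0 R)]
    simpa using hFTC
  -- pointwise AM-GM bound
  have base : ∀ a e : ℝ, -(2*a*e) ≤ t*a^2 + (1/t)*e^2 := by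
    intro a e
    have h2 : 0 ≤ (t*a+e)^2 / t := by positivity
    have h3 : (t*a+e)^2/t = t*a^2 + 2*a*e + (1/t)*e^2 := by field_simp; ring
    linarith [h3 ▸ h2]
  have hpt : ∀ r ∈ Set.Icc (0:ℝ) R,
      -(r ^ (d-2) * (2 * f r * deriv f r)) ≤
        t * (r ^ (d-3) * f r ^ 2) + (1/t) * (r ^ (d-1) * (deriv f r) ^ 2) := by
    intro r hr
    have hrpos : 0 ≤ r := hr.1
    have hp : 0 ≤ r ^ (d-3) := by positivity
    have hpow2 : r ^ (d-2) = r ^ (d-3) * r := by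
      rw [← pow_succ]; congr 1; omega
    have hpow1 : r ^ (d-1) = r ^ (d-3) * r^2 := by
      rw [← pow_add]; congr 1; omega
    have := mul_le_mul_of_nonneg_left (base (f r) (r * deriv f r)) hp
    rw [hpow2, hpow1]
    nlinarith [this]
  have hcontL : Continuous fun r : ℝ => t * (r ^ (d-3) * f r ^ 2) := by fun_prop
  have hcontR : Continuous fun r : ℝ => (1/t) * (r ^ (d-1) * (deriv f r) ^ 2) := by fun_prop
  have hcontLR : Continuous fun r : ℝ => t * (r ^ (d-3) * f r ^ 2)
      + (1/t) * (r ^ (d-1) * (deriv f r) ^ 2) := hcontL.add hcontR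
  have hmono := intervalIntegral.integral_mono_on hR.le
    ((hcont2.neg).intervalIntegrable (μ := volume) 0 R) (hcontLR.intervalIntegrable 0 R) hpt
  simp only [Pi.neg_apply, intervalIntegral.integral_neg] at hmono
  have hsum : (∫ r in (0:ℝ)..R, t * (r ^ (d-3) * f r ^ 2)
      + (1/t) * (r ^ (d-1) * (deriv f r) ^ 2)) = t * A + (1/t) * B := by
    rw [intervalIntegral.integral_add (hcontL.intervalIntegrable 0 R)
      (hcontR.intervalIntegrable 0 R),
      intervalIntegral.integral_const_mul, intervalIntegral.integral_const_mul]
  rw [hsum] at hmono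
  -- conclude A ≤ (4/c²) B
  clear_value A B t c
  have hAB : A ≤ 4 / c^2 * B := by
    have h1 : c * A ≤ t * A + (1/t) * B := by linarith [hsplit, hmono]
    have hc0 : c ≠ 0 := hdc.ne'
    rw [htdef] at h1
    have h2 : (1:ℝ)/(c/2) = 2/c := by field_simp
    rw [h2] at h1
    have h4 : c^2 * A ≤ c^2/2 * A + 2 * B := by
      have h3 := mul_le_mul_of_nonneg_left h1 hdc.le
      calc c^2*A = c*(c*A) := by ring
        _ ≤ c*(c/2*A + 2/c*B) := h3
        _ = c^2/2*A + 2*B := by field_simp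
    rw [div_mul_eq_mul_div, le_div_iff₀ (by positivity)]
    nlinarith [h4]
  -- convert to lintegrals
  have hsplitset : Ioc (0:ℝ) R ∪ Ioi R = Ioi 0 := Ioc_union_Ioi_eq_Ioi hR.le
  have hAeq : ∫⁻ r in Ioi (0:ℝ), ENNReal.ofReal (r ^ (d-3) * f r ^ 2) = ENNReal.ofReal A := by
    rw [← hsplitset, lintegral_union measurableSet_Ioi (Ioc_disjoint_Ioi le_rfl)]
    have hz2 : ∫⁻ r in Ioi R, ENNReal.ofReal (r ^ (d-3) * f r ^ 2) = 0 :=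
      calc ∫⁻ r in Ioi R, ENNReal.ofReal (r ^ (d-3) * f r ^ 2)
          = ∫⁻ _ in Ioi R, 0 := setLIntegral_congr_fun measurableSet_Ioi
            (fun r (hr : R < r) => by rw [hz r hr.le]; simp)
        _ = 0 := lintegral_zero
    have hcontA : Continuous fun r : ℝ => r ^ (d-3) * f r ^ 2 := by fun_prop
    rw [hz2, add_zero, ← ofReal_integral_eq_lintegral_ofReal hcontA.integrableOn_Ioc
      ((ae_restrict_iff' measurableSet_Ioc).2 (ae_of_all _ fun r hr => by
        have h0 := hr.1.le; positivity))]
    rw [hA, intervalIntegral.integral_of_le hR.le]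
  have hcontB : Continuous fun r : ℝ => r ^ (d-1) * (deriv f r) ^ 2 := by fun_prop
  have hBle : ENNReal.ofReal B ≤
      ∫⁻ r in Ioi (0:ℝ), ENNReal.ofReal (r ^ (d-1) * (deriv f r) ^ 2) := by
    have hBeq : ENNReal.ofReal B
        = ∫⁻ r in Ioc (0:ℝ) R, ENNReal.ofReal (r ^ (d-1) * (deriv f r) ^ 2) := by
      rw [hB, intervalIntegral.integral_of_le hR.le,
        ofReal_integral_eq_lintegral_ofReal hcontB.integrableOn_Ioc
        ((ae_restrict_iff' measurableSet_Ioc).2 (ae_of_all _ fun r hr => by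
          have h0 := hr.1.le; positivity))]
    rw [hBeq]
    exact lintegral_mono_set Ioc_subset_Ioi_self
  rw [hAeq]
  calc ENNReal.ofReal A ≤ ENNReal.ofReal (4 / c^2 * B) := ENNReal.ofReal_le_ofReal hAB
    _ = ENNReal.ofReal (4 / c^2) * ENNReal.ofReal B := ENNReal.ofReal_mul (by positivity)
    _ ≤ _ := mul_le_mul_right hBle _

/-- Hardy inequality in dimension `d ≥ 3`:
`∫ |u|²/|x|² ≤ (4/(d-2)²) ∫ |∇u|²` for smooth compactly supported `u`. -/
theorem hardy_dim_ge_three (d : ℕ) (hd : 3 ≤ d)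
    (u : EuclideanSpace ℝ (Fin d) → ℝ) (hu : ContDiff ℝ (⊤ : ℕ∞) u) (hsupp : HasCompactSupport u) :
    ∫ x : EuclideanSpace ℝ (Fin d), (u x) ^ 2 / ‖x‖ ^ 2 ≤
      (4 / ((d : ℝ) - 2) ^ 2) * ∫ x : EuclideanSpace ℝ (Fin d), ‖gradient u x‖ ^ 2 := by
  haveI : Inhabited (Fin d) := ⟨⟨0, by omega⟩⟩
  haveI : Nontrivial (EuclideanSpace ℝ (Fin d)) := inferInstance
  set c : ℝ := 4 / ((d : ℝ) - 2) ^ 2 with hcdef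
  have hc0 : 0 ≤ c := by positivity
  have hfinrank : Module.finrank ℝ (EuclideanSpace ℝ (Fin d)) = d := finrank_euclideanSpace_fin
  -- support radius
  obtain ⟨R₀, hR₀⟩ := hsupp.isCompact.isBounded.subset_closedBall (0 : EuclideanSpace ℝ (Fin d))
  set R : ℝ := max R₀ 0 + 1 with hRdef
  have hRpos : 0 < R := by positivity
  have hz : ∀ x : EuclideanSpace ℝ (Fin d), R ≤ ‖x‖ → u x = 0 := by
    intro x hx
    apply image_eq_zero_of_notMem_tsupport
    intro hmem
    have h2 := hR₀ hmem
    rw [Metric.mem_closedBall, dist_zero_right] at h2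
    have h1 : R₀ ≤ max R₀ 0 := le_max_left _ _
    linarith
  -- gradient facts
  have hgrad_eq : gradient u
      = fun x => (InnerProductSpace.toDual ℝ (EuclideanSpace ℝ (Fin d))).symm (fderiv ℝ u x) := rfl
  have hgrad_norm : ∀ x, ‖gradient u x‖ = ‖fderiv ℝ u x‖ := fun x => by
    rw [hgrad_eq]; exact LinearIsometryEquiv.norm_map _ _
  have hgrad_cont : Continuous (gradient u) := by
    rw [hgrad_eq]
    exact (InnerProductSpace.toDual ℝ _).symm.continuous.comp (hu.continuous_fderiv (by simp))
  have hgrad_supp : HasCompactSupport (gradient u) := by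
    rw [hgrad_eq]
    exact (hsupp.fderiv ℝ).comp_left (map_zero _)
  have hgi : Integrable (fun x : EuclideanSpace ℝ (Fin d) => ‖gradient u x‖ ^ 2) :=
    ((hgrad_cont.norm).pow 2).integrable_of_hasCompactSupport
      (hgrad_supp.norm.comp_left (g := fun y : ℝ => y ^ 2) (by simp) :)
  -- lintegral versions
  set g₁ : EuclideanSpace ℝ (Fin d) → ℝ≥0∞ := fun x => ENNReal.ofReal (u x ^ 2 / ‖x‖ ^ 2)
    with hg₁def
  set g₂ : EuclideanSpace ℝ (Fin d) → ℝ≥0∞ := fun x => ENNReal.ofReal (‖gradient u x‖ ^ 2)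
    with hg₂def
  have hg₁rm : Measurable fun x : EuclideanSpace ℝ (Fin d) => u x ^ 2 / ‖x‖ ^ 2 :=
    ((hu.continuous.pow 2).measurable).div ((continuous_norm.pow 2).measurable)
  have hg₁m : Measurable g₁ := hg₁rm.ennreal_ofReal
  have hg₂m : Measurable g₂ := ((hgrad_cont.norm.pow 2).measurable).ennreal_ofReal
  have h_int_eq1 : ∫ x : EuclideanSpace ℝ (Fin d), u x ^ 2 / ‖x‖ ^ 2 = (∫⁻ x, g₁ x).toReal := by
    rw [integral_eq_lintegral_of_nonneg_ae (ae_of_all _ fun x => by positivity)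
      hg₁rm.aemeasurable.aestronglyMeasurable]
  have h_int_eq2 : ∫ x : EuclideanSpace ℝ (Fin d), ‖gradient u x‖ ^ 2 = (∫⁻ x, g₂ x).toReal := by
    rw [integral_eq_lintegral_of_nonneg_ae
      (f := fun x : EuclideanSpace ℝ (Fin d) => ‖gradient u x‖ ^ 2)
      (ae_of_all _ fun x => by positivity)
      (hgrad_cont.norm.pow 2).measurable.aemeasurable.aestronglyMeasurable]
  have hRl_fin : (∫⁻ x, g₂ x) < ⊤ := by
    have heq : ∀ x : EuclideanSpace ℝ (Fin d), g₂ x = (‖(‖gradient u x‖ ^ 2 : ℝ)‖₊ : ℝ≥0∞) := by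
      intro x
      simp only [hg₂def]
      exact (Real.enorm_eq_ofReal (by positivity)).symm
    calc (∫⁻ x, g₂ x) = ∫⁻ x, (‖(‖gradient u x‖ ^ 2 : ℝ)‖₊ : ℝ≥0∞) := lintegral_congr heq
      _ < ⊤ := hgi.2
  -- main inequality in lintegral form
  have hmain : (∫⁻ x, g₁ x) ≤ ENNReal.ofReal c * ∫⁻ x, g₂ x := by
    rw [polar_lintegral volume g₁ hg₁m, polar_lintegral volume g₂ hg₂m]
    simp only [hfinrank]
    rw [← lintegral_const_mul' _ _ ENNReal.ofReal_ne_top]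
    refine lintegral_mono fun ω => ?_
    -- per-ray Hardy
    have hω : ‖(ω : EuclideanSpace ℝ (Fin d))‖ = 1 := mem_sphere_zero_iff_norm.1 ω.2
    set f : ℝ → ℝ := fun r => u (r • ω.1) with hfdef
    have hf : ContDiff ℝ (⊤ : ℕ∞) f := hu.comp (contDiff_id.smul contDiff_const)
    have hderiv : ∀ r : ℝ, HasDerivAt f (fderiv ℝ u (r • ω.1) ω.1) r := by
      intro r
      have h1 : HasDerivAt (fun s : ℝ => s • ω.1) ω.1 r := by
        simpa using (hasDerivAt_id r).smul_const ω.1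
      exact ((hu.differentiable (by simp)).differentiableAt.hasFDerivAt).comp_hasDerivAt r h1
    have hnsmul : ∀ r : ℝ, 0 ≤ r → ‖r • ω.1‖ = r := by
      intro r hr
      rw [norm_smul, hω, mul_one, Real.norm_eq_abs, abs_of_nonneg hr]
    have hfz : ∀ r, R ≤ r → f r = 0 := fun r hr =>
      hz _ (by rw [hnsmul r (le_trans hRpos.le hr)]; exact hr)
    have hderiv_le : ∀ r : ℝ, (deriv f r) ^ 2 ≤ ‖gradient u (r • ω.1)‖ ^ 2 := by
      intro r
      have h1 : deriv f r = fderiv ℝ u (r • ω.1) ω.1 := (hderiv r).deriv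
      have h2 : |deriv f r| ≤ ‖gradient u (r • ω.1)‖ := by
        rw [h1, hgrad_norm]
        calc |fderiv ℝ u (r • ω.1) ω.1| = ‖fderiv ℝ u (r • ω.1) ω.1‖ := (Real.norm_eq_abs _).symm
          _ ≤ ‖fderiv ℝ u (r • ω.1)‖ * ‖ω.1‖ := (fderiv ℝ u (r • ω.1)).le_opNorm _
          _ = ‖fderiv ℝ u (r • ω.1)‖ := by rw [hω, mul_one]
      calc (deriv f r) ^ 2 = |deriv f r| ^ 2 := (sq_abs _).symm
        _ ≤ ‖gradient u (r • ω.1)‖ ^ 2 := pow_le_pow_left₀ (abs_nonneg _) h2 2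
    calc ∫⁻ r in Ioi (0:ℝ), ENNReal.ofReal (r ^ (d - 1)) * g₁ (r • ω.1)
        = ∫⁻ r in Ioi (0:ℝ), ENNReal.ofReal (r ^ (d - 3) * f r ^ 2) := by
          refine setLIntegral_congr_fun measurableSet_Ioi (fun r (hr : 0 < r) => ?_)
          rw [hg₁def]
          simp only []
          rw [hnsmul r hr.le, ← ENNReal.ofReal_mul (by positivity)]
          congr 1
          have hrpow : r ^ (d - 1) = r ^ (d - 3) * r ^ 2 := by
            rw [← pow_add]; congr 1; omega
          rw [hrpow]
          field_simp
          simp only [hfdef]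
      _ ≤ ENNReal.ofReal c * ∫⁻ r in Ioi (0:ℝ),
            ENNReal.ofReal (r ^ (d - 1) * (deriv f r) ^ 2) := hardy_1d d hd f hf R hRpos hfz
      _ ≤ ENNReal.ofReal c * ∫⁻ r in Ioi (0:ℝ), ENNReal.ofReal (r ^ (d - 1)) * g₂ (r • ω.1) := by
          refine mul_le_mul_right (setLIntegral_mono (by fun_prop) fun r (hr : 0 < r) => ?_) _
          rw [hg₂def]
          simp only []
          rw [← ENNReal.ofReal_mul (by positivity)]
          exact ENNReal.ofReal_le_ofReal
            (mul_le_mul_of_nonneg_left (hderiv_le r) (by positivity))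
  -- conclude
  rw [h_int_eq1, h_int_eq2]
  calc (∫⁻ x, g₁ x).toReal ≤ (ENNReal.ofReal c * ∫⁻ x, g₂ x).toReal :=
        ENNReal.toReal_mono (ENNReal.mul_lt_top ENNReal.ofReal_lt_top hRl_fin).ne hmain
    _ = c * (∫⁻ x, g₂ x).toReal := by
        rw [ENNReal.toReal_mul, ENNReal.toReal_ofReal hc0]
end

section
/- Let μ be a nonnegative Radon measure on ℝ^d with Lebesgue decomposition μ = μ^a dx + μ^s (μ^s singular with respect to Lebesgue measure), let ψ : [0,∞) → [0,∞] be convex lower semicontinuous with recession constant C_ψ = lim_{t→∞} ψ(t)/t, and let φ ∈ C_c(ℝ^d) be nonnegative with ∫ φ dx > 0. Then ∫ ψ(μ^a) φ dx + C_ψ ∫ φ dμ^s ≥ ψ( (∫ φ dμ)/(∫ φ dx) ) ∫ φ dx. -/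
open MeasureTheory Filter
open scoped ENNReal NNReal

lemma exists_subgradient_aux (ψ : ℝ → ℝ) (hconv : ConvexOn ℝ (Set.Ici 0) ψ)
    (C : ℝ) (hC : Tendsto (fun t => ψ t / t) atTop (nhds C))
    (m : ℝ) (hm : 0 < m) :
    ∃ k, k ≤ C ∧ ∀ x, 0 ≤ x → ψ m + k * (x - m) ≤ ψ x := by
  set Sl : Set ℝ := (fun x => (ψ m - ψ x) / (m - x)) '' Set.Ico 0 m with hSl
  have hne : Sl.Nonempty := ⟨_, ⟨0, ⟨le_refl 0, hm⟩, rfl⟩⟩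
  -- any left slope ≤ any right slope
  have key : ∀ x ∈ Set.Ico (0:ℝ) m, ∀ z, m < z →
      (ψ m - ψ x) / (m - x) ≤ (ψ z - ψ m) / (z - m) := by
    intro x hx z hz
    exact hconv.slope_mono_adjacent hx.1 (le_trans hm.le hz.le) hx.2 hz
  have hbdd : BddAbove Sl := by
    refine ⟨(ψ (m+1) - ψ m) / (m + 1 - m), ?_⟩
    rintro _ ⟨x, hx, rfl⟩
    exact key x hx (m+1) (lt_add_one m)
  set k := sSup Sl with hk
  have hkle : ∀ z, m < z → k ≤ (ψ z - ψ m) / (z - m) := by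
    intro z hz
    exact csSup_le hne (by rintro _ ⟨x, hx, rfl⟩; exact key x hx z hz)
  refine ⟨k, ?_, ?_⟩
  · -- k ≤ C
    have hslope : Tendsto (fun z => (ψ z - ψ m) / (z - m)) atTop (nhds C) := by
      have h1 : Tendsto (fun z : ℝ => ψ m / z) atTop (nhds 0) :=
        tendsto_const_nhds.div_atTop tendsto_id
      have h2 : Tendsto (fun z : ℝ => m / z) atTop (nhds 0) :=
        tendsto_const_nhds.div_atTop tendsto_id
      have h3 : Tendsto (fun z : ℝ => z / (z - m)) atTop (nhds 1) := by
        have hden : Tendsto (fun z : ℝ => 1 - m / z) atTop (nhds 1) := by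
          simpa using (tendsto_const_nhds (x := (1:ℝ))).sub h2
        have : Tendsto (fun z : ℝ => (1 - m / z)⁻¹) atTop (nhds 1) := by
          simpa using hden.inv₀ one_ne_zero
        refine this.congr' ?_
        filter_upwards [eventually_gt_atTop (max m 0)] with z hz
        have hz0 : (0:ℝ) < z := lt_of_le_of_lt (le_max_right m 0) hz
        have hzm : m < z := lt_of_le_of_lt (le_max_left m 0) hz
        have he : (1 - m / z) = (z - m) / z := by field_simp
        rw [he, inv_div]
      have := ((hC.sub h1).mul h3)
      simp only [sub_zero, mul_one] at this
      refine this.congr' ?_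
      filter_upwards [eventually_gt_atTop (max m 0)] with z hz
      have hz0 : (0:ℝ) < z := lt_of_le_of_lt (le_max_right m 0) hz
      have hzm : m < z := lt_of_le_of_lt (le_max_left m 0) hz
      field_simp
      try ring
    exact ge_of_tendsto hslope (by filter_upwards [eventually_gt_atTop m] with z hz using hkle z hz)
  · intro x hx
    rcases lt_trichotomy x m with h | h | h
    · have hle : (ψ m - ψ x) / (m - x) ≤ k :=
        le_csSup hbdd ⟨x, ⟨hx, h⟩, rfl⟩
      have hmx : (0:ℝ) < m - x := by linarith
      rw [div_le_iff₀ hmx] at hle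
      nlinarith
    · subst h; simp
    · have hle := hkle x h
      have hxm : (0:ℝ) < x - m := by linarith
      rw [le_div_iff₀ hxm] at hle
      nlinarith


/-- Generalized Jensen inequality for a Radon measure `μ = a dx + μˢ` (with `μˢ`
singular), including the singular part weighted by the recession constant
`C = lim ψ(t)/t`:
`∫ ψ(a) φ dx + C ∫ φ dμˢ ≥ ψ((∫ φ dμ)/(∫ φ dx)) ∫ φ dx`. -/
theorem jensen_weighted_with_singular_part (d : ℕ) (ψ : ℝ → ℝ)
    (hconv : ConvexOn ℝ (Set.Ici 0) ψ) (hnn : ∀ s, 0 ≤ ψ s)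
    (hlsc : LowerSemicontinuousOn ψ (Set.Ici 0))
    (C : ℝ) (hC : Tendsto (fun t => ψ t / t) atTop (nhds C))
    (a : EuclideanSpace ℝ (Fin d) → ℝ) (ha : LocallyIntegrable a) (hann : ∀ x, 0 ≤ a x)
    (μs : Measure (EuclideanSpace ℝ (Fin d))) (hsing : μs ⟂ₘ volume)
    [IsFiniteMeasureOnCompacts μs]
    (μ : Measure (EuclideanSpace ℝ (Fin d)))
    (hμ : μ = volume.withDensity (fun x => ENNReal.ofReal (a x)) + μs)
    (φ : EuclideanSpace ℝ (Fin d) → ℝ) (hφc : Continuous φ) (hφs : HasCompactSupport φ)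
    (hφnn : ∀ x, 0 ≤ φ x) (hφpos : 0 < ∫ x, φ x)
    (hint : Integrable (fun x => ψ (a x) * φ x)) :
    ψ ((∫ x, φ x ∂μ) / ∫ x, φ x) * (∫ x, φ x) ≤
      (∫ x, ψ (a x) * φ x) + C * ∫ x, φ x ∂μs := by
  have hφint : Integrable φ volume := hφc.integrable_of_hasCompactSupport hφs
  have hφints : Integrable φ μs := hφc.integrable_of_hasCompactSupport hφs
  have haemeas : AEMeasurable (fun x => (a x).toNNReal) volume :=
    continuous_real_toNNReal.measurable.comp_aemeasurable ha.aestronglyMeasurable.aemeasurable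
  have haφ : Integrable (fun x => a x * φ x) := by
    simpa [smul_eq_mul] using ha.integrable_smul_right_of_hasCompactSupport hφc hφs
  have hwd : (fun x : EuclideanSpace ℝ (Fin d) => ENNReal.ofReal (a x))
      = fun x => ((a x).toNNReal : ℝ≥0∞) := rfl
  have hI1 : ∫ x, φ x ∂(volume.withDensity fun x => ENNReal.ofReal (a x))
      = ∫ x, a x * φ x := by
    rw [hwd, integral_withDensity_eq_integral_smul₀ haemeas]
    exact integral_congr_ae (Filter.Eventually.of_forall fun x => by
      simp [NNReal.smul_def, Real.coe_toNNReal _ (hann x)])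
  have hφwd : Integrable φ (volume.withDensity fun x => ENNReal.ofReal (a x)) := by
    rw [hwd, integrable_withDensity_iff_integrable_smul₀ haemeas]
    exact haφ.congr (Filter.Eventually.of_forall fun x => by
      simp [NNReal.smul_def, Real.coe_toNNReal _ (hann x)])
  have hT : ∫ x, φ x ∂μ = (∫ x, a x * φ x) + ∫ x, φ x ∂μs := by
    rw [hμ, integral_add_measure hφwd hφints, hI1]
  have hAnn : 0 ≤ ∫ x, a x * φ x :=
    integral_nonneg fun x => mul_nonneg (hann x) (hφnn x)
  have hSnn : 0 ≤ ∫ x, φ x ∂μs := integral_nonneg hφnn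
  have hTnn : 0 ≤ ∫ x, φ x ∂μ := by rw [hT]; positivity
  rcases eq_or_lt_of_le hTnn with hT0 | hTpos
  · -- zero case
    have hA0 : ∫ x, a x * φ x = 0 := by linarith [hT.symm.trans hT0.symm]
    have hS0 : ∫ x, φ x ∂μs = 0 := by
      have := hT; rw [← hT0, hA0] at this; linarith
    have haezero : (fun x => a x * φ x) =ᵐ[volume] 0 :=
      (integral_eq_zero_iff_of_nonneg (fun x => mul_nonneg (hann x) (hφnn x)) haφ).1 hA0
    have hcong : (fun x => ψ (a x) * φ x) =ᵐ[volume] fun x => ψ 0 * φ x := by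
      filter_upwards [haezero] with x hx
      rcases mul_eq_zero.1 hx with h | h
      · rw [h]
      · simp [h]
    have hψint : ∫ x, ψ (a x) * φ x = ψ 0 * ∫ x, φ x := by
      rw [integral_congr_ae hcong, integral_const_mul]
    rw [← hT0, hS0, hψint, zero_div]
    simp
  · -- positive case
    have hm : 0 < (∫ x, φ x ∂μ) / ∫ x, φ x := div_pos hTpos hφpos
    obtain ⟨k, hkC, hsub⟩ := exists_subgradient_aux ψ hconv C hC _ hm
    set m := (∫ x, φ x ∂μ) / ∫ x, φ x with hmdef
    have hℓeq : (fun x => (ψ m + k * (a x - m)) * φ x)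
        = fun x => (ψ m - k * m) * φ x + k * (a x * φ x) := by
      funext x; ring
    have hℓint : Integrable (fun x => (ψ m + k * (a x - m)) * φ x) := by
      rw [hℓeq]; exact (hφint.const_mul _).add (haφ.const_mul k)
    have hmono : (∫ x, (ψ m + k * (a x - m)) * φ x) ≤ ∫ x, ψ (a x) * φ x :=
      integral_mono hℓint hint fun x =>
        mul_le_mul_of_nonneg_right (hsub (a x) (hann x)) (hφnn x)
    have hcalc : (∫ x, (ψ m + k * (a x - m)) * φ x)
        = (ψ m - k * m) * (∫ x, φ x) + k * ∫ x, a x * φ x := by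
      rw [hℓeq, integral_add ((hφint.const_mul _)) (haφ.const_mul k),
        integral_const_mul, integral_const_mul]
    have hmI : m * ∫ x, φ x = (∫ x, a x * φ x) + ∫ x, φ x ∂μs := by
      rw [hmdef, div_mul_cancel₀ _ (ne_of_gt hφpos), hT]
    have hkS : k * ∫ x, φ x ∂μs ≤ C * ∫ x, φ x ∂μs :=
      mul_le_mul_of_nonneg_right hkC hSnn
    have hkmI : k * (m * ∫ x, φ x) = k * ((∫ x, a x * φ x) + ∫ x, φ x ∂μs) := by
      rw [hmI]
    nlinarith [hmono, hcalc, hkmI, hkS]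
end

section
/- In ℝ^d (d ≥ 2), let B be the open unit ball centered at the origin and define the measure μ(E) = ∫_{E∩B} 1/|x₁| dx for Borel sets E. Then μ vanishes on sets of capacity zero but μ is not a Radon measure (it is infinite on some compact sets); moreover, every u ∈ H¹(ℝ^d) with ∫ u² dμ < ∞ must vanish quasi-everywhere on the set {x ∈ B : x₁ = 0}, which has positive capacity. -/
open MeasureTheory
open scoped ENNReal

/-- The `H¹`-capacity of a set `S ⊆ ℝ^d`. -/
noncomputable def sobolevCapacity (d : ℕ) (S : Set (EuclideanSpace ℝ (Fin d))) : ℝ≥0∞ :=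
  ⨅ (u : EuclideanSpace ℝ (Fin d) → ℝ) (_ : ContDiff ℝ 1 u ∧
      ∃ V, IsOpen V ∧ S ⊆ V ∧ ∀ x ∈ V, 1 ≤ u x),
    ∫⁻ x, ENNReal.ofReal (‖gradient u x‖ ^ 2 + (u x) ^ 2)

/-!
Near a point of the hyperplane `{x₁ = 0}` inside `B`, the density `1/|x₁|` is not locally
integrable (Fubini reduces this to `∫₀ dt/t = ∞`), so `μ` gives infinite mass to every
neighbourhood of such a point. Hence `μ` is infinite on compact balls, and a continuous `u` with
`∫ u² dμ < ∞` vanishes on the whole slice. Since `μ ≪ vol ≤ cap`, `μ` kills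
capacity-null sets.
The slice has positive capacity: along each segment of length `1` in the `x₁`-direction starting
on the slice, a test function `u ≥ 1` at the start point has `∫ (u'² + u²) ≥ 1/2`, and
integrating over the slice bounds the energy of `u` from below.
-/

open Set Metric Filter Topology

theorem lintegral_ofReal_inv_abs_eq_top {A : Set ℝ} (hA : A ∈ 𝓝 0) :
    ∫⁻ t in A, ENNReal.ofReal |t|⁻¹ = ⊤ := by
  obtain ⟨s, hs, hsA⟩ := Metric.mem_nhds_iff.1 hA
  refine top_unique (le_trans ?_ (lintegral_mono_set hsA))
  by_contra h
  have hint : IntegrableOn (fun t : ℝ => |t|⁻¹) (ball 0 s) :=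
    (lintegral_ofReal_ne_top_iff_integrable (by fun_prop)
      (ae_of_all _ fun t => by positivity)).1 (ne_top_of_lt (not_le.1 h))
  have hinv : IntervalIntegrable (fun t : ℝ => t⁻¹) volume (-s) s := by
    rw [intervalIntegrable_iff_integrableOn_Ioo_of_le (by linarith)]
    rw [Real.ball_eq_Ioo, zero_sub, zero_add] at hint
    exact hint.mono' (by fun_prop) (ae_of_all _ fun t => by simp)
  simp only [intervalIntegrable_inv_iff, mem_uIcc] at hinv
  rcases hinv with h | h
  · linarith
  · exact h (Or.inl ⟨by linarith, hs.le⟩)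

theorem sq_mul_div_le_integral_deriv_sq_add_sq {g g' : ℝ → ℝ}
    (hg : ∀ t, HasDerivAt g (g' t) t) (hg' : Continuous g') {a : ℝ} (ha : 0 ≤ a) :
    g 0 ^ 2 * a / (1 + a) ≤ ∫ t in (0)..a, (g' t ^ 2 + g t ^ 2) := by
  have hgc : Continuous g := continuous_iff_continuousAt.2 fun t => (hg t).continuousAt
  set E := ∫ t in (0)..a, (g' t ^ 2 + g t ^ 2)
  have hI : ∀ b c : ℝ, IntervalIntegrable (fun t => g' t ^ 2 + g t ^ 2) volume b c :=
    fun b c => (by fun_prop : Continuous fun t => g' t ^ 2 + g t ^ 2).intervalIntegrable b c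
  -- `-(g²)' = -2 g g' ≤ g'² + g²`, so `g²` cannot drop by more than the energy.
  have hdrop : ∀ t ∈ Icc 0 a, g 0 ^ 2 ≤ g t ^ 2 + E := by
    intro t ht
    have hftc : ∫ s in (0)..t, -(2 * g s * g' s) = g 0 ^ 2 - g t ^ 2 := by
      rw [intervalIntegral.integral_neg, intervalIntegral.integral_eq_sub_of_hasDerivAt
        (f := fun s => g s ^ 2) (fun s _ => by simpa using (hg s).fun_pow 2)
        ((by fun_prop : Continuous fun s => 2 * g s * g' s).intervalIntegrable _ _)]
      ring
    have hle : ∫ s in (0)..t, -(2 * g s * g' s) ≤ ∫ s in (0)..t, (g' s ^ 2 + g s ^ 2) :=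
      intervalIntegral.integral_mono_on ht.1
        ((by fun_prop : Continuous fun s => -(2 * g s * g' s)).intervalIntegrable _ _) (hI _ _)
        fun s _ => by nlinarith [sq_nonneg (g s + g' s)]
    have hmono : ∫ s in (0)..t, (g' s ^ 2 + g s ^ 2) ≤ E :=
      intervalIntegral.integral_mono_interval le_rfl ht.1 ht.2
        (ae_of_all _ fun s => by positivity) (hI _ _)
    linarith
  have hsq : ∫ t in (0)..a, g t ^ 2 ≤ E :=
    intervalIntegral.integral_mono_on ha ((hgc.pow 2).intervalIntegrable _ _) (hI _ _)
      fun s _ => le_add_of_nonneg_left (sq_nonneg _)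
  have hint : a * g 0 ^ 2 ≤ (∫ t in (0)..a, g t ^ 2) + a * E := by
    calc a * g 0 ^ 2 = ∫ _ in (0)..a, g 0 ^ 2 := by simp
      _ ≤ ∫ t in (0)..a, (g t ^ 2 + E) :=
          intervalIntegral.integral_mono_on ha intervalIntegrable_const
            (((hgc.pow 2).add continuous_const).intervalIntegrable _ _) hdrop
      _ = _ := by
          rw [intervalIntegral.integral_add (f := fun t => g t ^ 2)
            ((hgc.pow 2).intervalIntegrable _ _) intervalIntegrable_const]
          simp
  rw [div_le_iff₀ (by positivity)]
  nlinarith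

theorem lintegral_ofReal_sq_eq_top_of_continuousAt {X : Type*} [TopologicalSpace X]
    [MeasurableSpace X] [OpensMeasurableSpace X] {μ : Measure X} {u : X → ℝ} {x : X}
    (hu : ContinuousAt u x) (hux : u x ≠ 0) (hμ : ∀ s ∈ 𝓝 x, μ s = ⊤) :
    ∫⁻ y, ENNReal.ofReal (u y ^ 2) ∂μ = ⊤ := by
  have hlt : u x ^ 2 / 2 < u x ^ 2 := half_lt_self (by positivity)
  obtain ⟨t, hts, ht, hxt⟩ := mem_nhds_iff.1 ((hu.pow 2).eventually (lt_mem_nhds hlt))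
  refine top_unique ?_
  calc ⊤ = ∫⁻ _ in t, ENNReal.ofReal (u x ^ 2 / 2) ∂μ := by
        rw [setLIntegral_const, hμ t (ht.mem_nhds hxt), ENNReal.mul_top (by positivity)]
    _ ≤ ∫⁻ y in t, ENNReal.ofReal (u y ^ 2) ∂μ :=
        setLIntegral_mono' ht.measurableSet fun y hy => ENNReal.ofReal_le_ofReal (hts hy).le
    _ ≤ _ := setLIntegral_le_lintegral _ _

theorem ofReal_sq_mul_div_le_setLIntegral_energy_segment {E : Type*} [NormedAddCommGroup E]
    [InnerProductSpace ℝ E] [CompleteSpace E] {u : E → ℝ} (hu : ContDiff ℝ 1 u) (p : E)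
    {v : E} (hv : ‖v‖ ≤ 1) {a : ℝ} (ha : 0 ≤ a) :
    ENNReal.ofReal (u p ^ 2 * a / (1 + a)) ≤
      ∫⁻ t in Ioc 0 a,
        ENNReal.ofReal (‖gradient u (p + t • v)‖ ^ 2 + u (p + t • v) ^ 2) := by
  set g' : ℝ → ℝ := fun t => fderiv ℝ u (p + t • v) v
  have hg : ∀ t, HasDerivAt (fun t => u (p + t • v)) (g' t) t := fun t =>
    ((hu.differentiable one_ne_zero) _).hasFDerivAt.comp_hasDerivAt t
      (by simpa using ((hasDerivAt_id t).smul_const v).const_add p)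
  have hg' : Continuous g' :=
    ((hu.continuous_fderiv one_ne_zero).comp (by fun_prop)).clm_apply continuous_const
  have hderiv : ∀ t, |g' t| ≤ ‖gradient u (p + t • v)‖ := fun t =>
    calc |g' t| = |inner ℝ (gradient u (p + t • v)) v| := by rw [inner_gradient_left]
      _ ≤ ‖gradient u (p + t • v)‖ * ‖v‖ := abs_real_inner_le_norm _ _
      _ ≤ ‖gradient u (p + t • v)‖ := mul_le_of_le_one_right (norm_nonneg _) hv
  have hcont : Continuous fun t => g' t ^ 2 + u (p + t • v) ^ 2 :=
    hg'.pow 2 |>.add ((hu.continuous.comp (by fun_prop)).pow 2)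
  calc ENNReal.ofReal (u p ^ 2 * a / (1 + a))
      ≤ ENNReal.ofReal (∫ t in (0)..a, (g' t ^ 2 + u (p + t • v) ^ 2)) :=
        ENNReal.ofReal_le_ofReal <| by
          simpa using sq_mul_div_le_integral_deriv_sq_add_sq hg hg' ha
    _ = ∫⁻ t in Ioc 0 a, ENNReal.ofReal (g' t ^ 2 + u (p + t • v) ^ 2) := by
        rw [intervalIntegral.integral_of_le ha, ofReal_integral_eq_lintegral_ofReal
          hcont.integrableOn_Ioc (ae_of_all _ fun _ => by positivity)]
    _ ≤ _ := lintegral_mono fun t => ENNReal.ofReal_le_ofReal <|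
        add_le_add_left (sq_le_sq' (abs_le.1 (hderiv t)).1 (abs_le.1 (hderiv t)).2) _

namespace EuclideanSpace

/-- `ℝⁿ⁺¹ ≃ ℝ × ℝⁿ`, splitting off the `i`-th coordinate. -/
noncomputable def coordSplit {n : ℕ} (i : Fin (n + 1)) :
    EuclideanSpace ℝ (Fin (n + 1)) ≃ᵐ ℝ × (Fin n → ℝ) :=
  (MeasurableEquiv.toLp 2 (Fin (n + 1) → ℝ)).symm.trans
    (MeasurableEquiv.piFinSuccAbove (fun _ => ℝ) i)

variable {n : ℕ} (i : Fin (n + 1))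

theorem measurePreserving_coordSplit :
    MeasurePreserving (coordSplit i) volume (volume.prod volume) :=
  (measurePreserving_piFinSuccAbove (fun _ => volume) i).comp
    (volume_preserving_symm_measurableEquiv_toLp (Fin (n + 1)))

theorem coordSplit_symm_apply (t : ℝ) (y : Fin n → ℝ) :
    (coordSplit i).symm (t, y) = WithLp.toLp 2 (i.insertNth t y) := rfl

theorem coordSplit_symm_apply_self (t : ℝ) (y : Fin n → ℝ) :
    (coordSplit i).symm (t, y) i = t := by
  simp [coordSplit_symm_apply]

theorem coordSplit_symm_eq_add (t : ℝ) (y : Fin n → ℝ) :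
    (coordSplit i).symm (t, y) = (coordSplit i).symm (0, y) + t • single i 1 := by
  ext k
  induction k using Fin.succAboveCases i <;> simp [coordSplit_symm_apply]

theorem continuous_coordSplit_symm_zero :
    Continuous fun y : Fin n → ℝ => (coordSplit i).symm (0, y) := by
  simp only [coordSplit_symm_apply]
  fun_prop

theorem setLIntegral_preimage_coordSplit {F : EuclideanSpace ℝ (Fin (n + 1)) → ℝ≥0∞}
    (hF : Measurable F) (A : Set ℝ) (B : Set (Fin n → ℝ)) :
    ∫⁻ x in coordSplit i ⁻¹' (A ×ˢ B), F x =
      ∫⁻ y in B, ∫⁻ t in A, F ((coordSplit i).symm (t, y)) := by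
  have hFs : Measurable fun p => F ((coordSplit i).symm p) :=
    hF.comp (coordSplit i).symm.measurable
  calc ∫⁻ x in coordSplit i ⁻¹' (A ×ˢ B), F x
      = ∫⁻ x in coordSplit i ⁻¹' (A ×ˢ B), F ((coordSplit i).symm (coordSplit i x)) := by
        simp only [MeasurableEquiv.symm_apply_apply]
    _ = ∫⁻ p in A ×ˢ B, F ((coordSplit i).symm p) ∂(volume.prod volume) :=
        (measurePreserving_coordSplit i).setLIntegral_comp_preimage_emb
          (coordSplit i).measurableEmbedding (fun p => F ((coordSplit i).symm p)) _
    _ = _ := by rw [← Measure.prod_restrict, lintegral_prod_symm _ hFs.aemeasurable]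

theorem volume_setOf_coordSplit_symm_zero_mem_pos {U : Set (EuclideanSpace ℝ (Fin (n + 1)))}
    (hU : IsOpen U)
    {c : EuclideanSpace ℝ (Fin (n + 1))} (hcU : c ∈ U) (hc : c i = 0) :
    0 < volume {y | (coordSplit i).symm (0, y) ∈ U} := by
  refine (hU.preimage (continuous_coordSplit_symm_zero i)).measure_pos _
    ⟨(coordSplit i c).2, ?_⟩
  have hc' : (coordSplit i c).1 = 0 := hc
  rwa [mem_preimage, ← hc', Prod.mk.eta, MeasurableEquiv.symm_apply_apply]

end EuclideanSpace

open EuclideanSpace in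
theorem setLIntegral_ofReal_inv_abs_coord_eq_top {n : ℕ} (i : Fin (n + 1))
    {c : EuclideanSpace ℝ (Fin (n + 1))} (hc : c i = 0)
    {U : Set (EuclideanSpace ℝ (Fin (n + 1)))} (hU : U ∈ 𝓝 c) :
    ∫⁻ x in U, ENNReal.ofReal |x i|⁻¹ = ⊤ := by
  obtain ⟨r, hr, hrU⟩ := Metric.mem_nhds_iff.1 hU
  set B := {y | (coordSplit i).symm (0, y) ∈ ball c (r / 2)}
  have hB : 0 < volume B :=
    volume_setOf_coordSplit_symm_zero_mem_pos i isOpen_ball (mem_ball_self (half_pos hr)) hc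
  have hsub : coordSplit i ⁻¹' (ball 0 (r / 2) ×ˢ B) ⊆ U := by
    rintro x ⟨hxi, hy⟩
    set p := (coordSplit i).symm (0, (coordSplit i x).2)
    have hx := coordSplit_symm_eq_add i (coordSplit i x).1 (coordSplit i x).2
    rw [Prod.mk.eta, MeasurableEquiv.symm_apply_apply] at hx
    have hxp : dist x p < r / 2 := by
      rw [dist_eq_norm, hx, add_sub_cancel_left]
      simpa [norm_smul] using hxi
    have hpc : dist p c < r / 2 := hy
    exact hrU (mem_ball.2 (by linarith [dist_triangle x p c]))
  refine top_unique ?_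
  calc ⊤ = ∫⁻ _ in B, ⊤ := by rw [setLIntegral_const, ENNReal.top_mul hB.ne']
    _ = ∫⁻ y in B, ∫⁻ t in ball 0 (r / 2), ENNReal.ofReal |t|⁻¹ := by
        simp only [lintegral_ofReal_inv_abs_eq_top (ball_mem_nhds _ (half_pos hr))]
    _ = ∫⁻ x in coordSplit i ⁻¹' (ball 0 (r / 2) ×ˢ B), ENNReal.ofReal |x i|⁻¹ := by
        rw [setLIntegral_preimage_coordSplit i (by fun_prop)]
        simp only [coordSplit_symm_apply_self]
    _ ≤ _ := lintegral_mono_set hsub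

noncomputable def invAbsCoordMeasure {d : ℕ} (i : Fin d) : Measure (EuclideanSpace ℝ (Fin d)) :=
  (volume.restrict (ball 0 1)).withDensity fun x => ENNReal.ofReal |x i|⁻¹

theorem invAbsCoordMeasure_absolutelyContinuous {d : ℕ} (i : Fin d) :
    invAbsCoordMeasure i ≪ volume :=
  (withDensity_absolutelyContinuous _ _).trans Measure.restrict_le_self.absolutelyContinuous

theorem invAbsCoordMeasure_eq_top_of_mem_nhds {n : ℕ} (i : Fin (n + 1))
    {x : EuclideanSpace ℝ (Fin (n + 1))} (hx : x ∈ ball 0 1) (hxi : x i = 0)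
    {s : Set (EuclideanSpace ℝ (Fin (n + 1)))} (hs : s ∈ 𝓝 x) :
    invAbsCoordMeasure i s = ⊤ := by
  rw [invAbsCoordMeasure, withDensity_apply', Measure.restrict_restrict' measurableSet_ball]
  exact setLIntegral_ofReal_inv_abs_coord_eq_top i hxi (inter_mem hs (isOpen_ball.mem_nhds hx))

theorem volume_le_sobolevCapacity {d : ℕ} (S : Set (EuclideanSpace ℝ (Fin d))) :
    volume S ≤ sobolevCapacity d S := by
  refine le_iInf₂ fun u ⟨_, V, hV, hSV, hu⟩ => ?_
  calc volume S ≤ ∫⁻ _ in V, 1 := by rw [setLIntegral_one]; exact measure_mono hSV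
    _ ≤ ∫⁻ x in V, ENNReal.ofReal (‖gradient u x‖ ^ 2 + u x ^ 2) :=
        setLIntegral_mono' hV.measurableSet fun x hx => ENNReal.one_le_ofReal.2 (by
          nlinarith [hu x hx, sq_nonneg ‖gradient u x‖])
    _ ≤ _ := setLIntegral_le_lintegral _ _

theorem sobolevCapacity_empty (d : ℕ) : sobolevCapacity d ∅ = 0 :=
  nonpos_iff_eq_zero.1 <| iInf₂_le_of_le (fun _ => 0)
    ⟨contDiff_const, ∅, isOpen_empty, subset_rfl, fun _ h => h.elim⟩
    (by simp [gradient_fun_const])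

open EuclideanSpace in
theorem sobolevCapacity_inter_hyperplane_pos {n : ℕ} (i : Fin (n + 1))
    {U : Set (EuclideanSpace ℝ (Fin (n + 1)))} (hU : IsOpen U)
    {c : EuclideanSpace ℝ (Fin (n + 1))} (hcU : c ∈ U) (hc : c i = 0) :
    0 < sobolevCapacity (n + 1) {x | x ∈ U ∧ x i = 0} := by
  set B := {y | (coordSplit i).symm (0, y) ∈ U}
  have hBm : MeasurableSet B := (hU.preimage (continuous_coordSplit_symm_zero i)).measurableSet
  refine lt_of_lt_of_le (ENNReal.mul_pos (by norm_num : ENNReal.ofReal (1 / 2) ≠ 0)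
    (volume_setOf_coordSplit_symm_zero_mem_pos i hU hcU hc).ne')
    (le_iInf₂ fun u ⟨hu, V, _, hSV, hV⟩ => ?_)
  have hF : Measurable fun x => ENNReal.ofReal (‖gradient u x‖ ^ 2 + u x ^ 2) := by
    have hgrad : Continuous (gradient u) :=
      (InnerProductSpace.toDual ℝ _).symm.continuous.comp (hu.continuous_fderiv one_ne_zero)
    exact ((hgrad.norm.pow 2).add (hu.continuous.pow 2)).measurable.ennreal_ofReal
  calc ENNReal.ofReal (1 / 2) * volume B = ∫⁻ _ in B, ENNReal.ofReal (1 / 2) :=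
        (setLIntegral_const _ _).symm
    _ ≤ ∫⁻ y in B, ∫⁻ t in Ioc 0 1, ENNReal.ofReal
          (‖gradient u ((coordSplit i).symm (t, y))‖ ^ 2
            + u ((coordSplit i).symm (t, y)) ^ 2) := by
        refine setLIntegral_mono' hBm fun y hy => ?_
        set p := (coordSplit i).symm (0, y)
        have hup : 1 ≤ u p := hV _ (hSV ⟨hy, coordSplit_symm_apply_self i 0 y⟩)
        calc ENNReal.ofReal (1 / 2) ≤ ENNReal.ofReal (u p ^ 2 * 1 / (1 + 1)) :=
              ENNReal.ofReal_le_ofReal (by nlinarith)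
          _ ≤ _ := ofReal_sq_mul_div_le_setLIntegral_energy_segment hu _
                (v := single i 1) (by simp) zero_le_one
          _ = _ := setLIntegral_congr_fun measurableSet_Ioc fun t _ => by
                rw [← coordSplit_symm_eq_add i t y]
    _ = ∫⁻ x in coordSplit i ⁻¹' (Ioc 0 1 ×ˢ B),
          ENNReal.ofReal (‖gradient u x‖ ^ 2 + u x ^ 2) :=
        (setLIntegral_preimage_coordSplit i hF _ _).symm
    _ ≤ _ := setLIntegral_le_lintegral _ _

/-- The measure `μ(E) = ∫_{E ∩ B} 1/|x₁| dx` on `ℝ^d`, `d ≥ 2`, vanishes on capacity-zero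
sets but is not Radon (it is infinite on some compact set); moreover every `u ∈ H¹` with
`∫ u² dμ < ∞` vanishes quasi-everywhere on the slice `{x ∈ B : x₁ = 0}`, which has
positive capacity. -/
theorem non_radon_capacitary_counterexample (d : ℕ) (hd : 2 ≤ d) :
    (∀ S, sobolevCapacity d S = 0 →
      ((volume.restrict (Metric.ball (0 : EuclideanSpace ℝ (Fin d)) 1)).withDensity
        (fun x => ENNReal.ofReal |x ⟨0, by omega⟩|⁻¹)) S = 0) ∧
    (∃ K : Set (EuclideanSpace ℝ (Fin d)), IsCompact K ∧
      ((volume.restrict (Metric.ball (0 : EuclideanSpace ℝ (Fin d)) 1)).withDensity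
        (fun x => ENNReal.ofReal |x ⟨0, by omega⟩|⁻¹)) K = ⊤) ∧
    (∀ u : EuclideanSpace ℝ (Fin d) → ℝ, Differentiable ℝ u →
      MemLp u 2 volume → MemLp (fun x => ‖gradient u x‖) 2 volume →
      (∫⁻ x, ENNReal.ofReal ((u x) ^ 2)
          ∂((volume.restrict (Metric.ball (0 : EuclideanSpace ℝ (Fin d)) 1)).withDensity
            (fun x => ENNReal.ofReal |x ⟨0, by omega⟩|⁻¹))) < ⊤ →
      sobolevCapacity d
        {x | x ∈ Metric.ball (0 : EuclideanSpace ℝ (Fin d)) 1 ∧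
          x ⟨0, by omega⟩ = 0 ∧ u x ≠ 0} = 0) ∧
    0 < sobolevCapacity d
        {x | x ∈ Metric.ball (0 : EuclideanSpace ℝ (Fin d)) 1 ∧ x ⟨0, by omega⟩ = 0} := by
  obtain ⟨n, rfl⟩ : ∃ n, d = n + 1 := ⟨d - 1, by omega⟩
  have h0 : (0 : EuclideanSpace ℝ (Fin (n + 1))) ∈ ball 0 1 := mem_ball_self one_pos
  refine ⟨fun S hS => invAbsCoordMeasure_absolutelyContinuous _ ?_,
    ⟨closedBall 0 (1 / 2), isCompact_closedBall _ _,
      invAbsCoordMeasure_eq_top_of_mem_nhds _ h0 rfl (closedBall_mem_nhds _ (by norm_num))⟩,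
    fun u hu _ _ hfin => ?_, sobolevCapacity_inter_hyperplane_pos _ isOpen_ball h0 rfl⟩
  · exact nonpos_iff_eq_zero.1 (hS ▸ volume_le_sobolevCapacity S)
  · convert sobolevCapacity_empty (n + 1)
    refine eq_empty_of_forall_notMem fun x ⟨hx, hxi, hux⟩ => hfin.ne ?_
    exact lintegral_ofReal_sq_eq_top_of_continuousAt hu.continuous.continuousAt hux
      fun s hs => invAbsCoordMeasure_eq_top_of_mem_nhds _ hx hxi hs
end

section
/- Let X be a metric space and F_n, F : X → (-∞, ∞] with F_n Γ-converging to F. If (u_n) is a sequence in X with a convergent subsequence and F_n(u_n) − inf_X F_n → 0, then F attains its minimum on X, and every cluster point u of (u_n) satisfies F(u) = min_X F = lim (along the subsequence) of inf_X F_n. -/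
open Filter Topology

/-! Along a subsequence on which `uₙ → w`, the liminf inequality and `Fₙ(uₙ) - inf Fₙ → 0` give
`F w ≤ liminf inf Fₙ`, while recovery sequences give `limsup inf Fₙ ≤ F x` for every `x`; hence
`F w = inf F` and `inf Fₙ → F w` along it. Both hypotheses survive passing to a subsequence `φ`:
for the liminf inequality, extend a competitor sequence by its limit off the range of `φ`. -/

lemma StrictMono.tendsto_extend {α : Type*} [TopologicalSpace α] {φ : ℕ → ℕ}
    (hφ : StrictMono φ) {g : ℕ → α} {w : α} (hg : Tendsto g atTop (𝓝 w)) :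
    Tendsto (Function.extend φ g fun _ => w) atTop (𝓝 w) := by
  intro s hs
  obtain ⟨K, hK⟩ := eventually_atTop.1 (hg hs)
  refine eventually_atTop.2 ⟨φ K, fun n hn => ?_⟩
  by_cases hrange : ∃ k, φ k = n
  · obtain ⟨k, rfl⟩ := hrange
    rw [hφ.injective.extend_apply]
    exact hK k (hφ.le_iff_le.1 hn)
  · rw [Function.extend_apply' _ _ _ hrange]
    exact mem_of_mem_nhds hs

lemma EReal.liminf_le_liminf_of_tendsto_sub_zero {α : Type*} {f : Filter α} [f.NeBot]
    {a b : α → EReal} (h : Tendsto (fun i => a i - b i) f (𝓝 0)) :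
    liminf a f ≤ liminf b f := by
  have hle : ∀ᶠ i in f, a i ≤ (a i - b i) + b i := by
    filter_upwards [h.eventually_ne EReal.zero_ne_bot, h.eventually_ne EReal.zero_ne_top]
      with i hbot htop
    exact (EReal.sub_le_iff_le_add (.inr htop) (.inr hbot)).1 le_rfl
  calc liminf a f ≤ liminf ((fun i => a i - b i) + b) f := liminf_le_liminf hle
    _ ≤ limsup (fun i => a i - b i) f + liminf b f :=
        EReal.liminf_add_le (by simp [h.limsup_eq]) (by simp [h.limsup_eq])
    _ = liminf b f := by rw [h.limsup_eq, zero_add]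

lemma limsup_iInf_le_iInf_of_recovery {X β ι : Type*} [CompleteLinearOrder β]
    [TopologicalSpace β] [OrderTopology β] {l : Filter ι} [l.NeBot]
    {Fn : ι → X → β} {F : X → β}
    (hrec : ∀ u, ∃ un : ι → X, Tendsto (fun n => Fn n (un n)) l (𝓝 (F u))) :
    limsup (fun n => ⨅ x, Fn n x) l ≤ ⨅ x, F x := by
  refine le_iInf fun u => ?_
  obtain ⟨un, hun⟩ := hrec u
  calc limsup (fun n => ⨅ x, Fn n x) l ≤ limsup (fun n => Fn n (un n)) l :=
        limsup_le_limsup (.of_forall fun n => iInf_le _ _)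
    _ = F u := hun.limsup_eq

def GammaLiminfInequality {X β : Type*} [TopologicalSpace X] [CompleteLattice β]
    (Fn : ℕ → X → β) (F : X → β) : Prop :=
  ∀ (u : X) (un : ℕ → X), Tendsto un atTop (𝓝 u) → F u ≤ liminf (fun n => Fn n (un n)) atTop

namespace GammaLiminfInequality

variable {X : Type*} [TopologicalSpace X]

lemma comp {β : Type*} [CompleteLattice β] {Fn : ℕ → X → β} {F : X → β}
    (h : GammaLiminfInequality Fn F) {φ : ℕ → ℕ} (hφ : StrictMono φ) :
    GammaLiminfInequality (fun k => Fn (φ k)) F := by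
  intro u un hun
  set z := Function.extend φ un fun _ => u
  have hzφ : (fun n => Fn n (z n)) ∘ φ = fun k => Fn (φ k) (un k) :=
    funext fun k => by simp only [Function.comp_apply, z, hφ.injective.extend_apply]
  calc F u ≤ liminf (fun n => Fn n (z n)) atTop := h u z (hφ.tendsto_extend hun)
    _ ≤ liminf ((fun n => Fn n (z n)) ∘ φ) atTop := hφ.tendsto_atTop.liminf_le_liminf_comp
    _ = liminf (fun k => Fn (φ k) (un k)) atTop := by rw [hzφ]

lemma eq_iInf_and_tendsto_iInf {Fn : ℕ → X → EReal} {F : X → EReal}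
    (h : GammaLiminfInequality Fn F)
    (hrec : ∀ u, ∃ un : ℕ → X, Tendsto (fun n => Fn n (un n)) atTop (𝓝 (F u)))
    {un : ℕ → X} (hmin : Tendsto (fun n => Fn n (un n) - ⨅ x, Fn n x) atTop (𝓝 0))
    {w : X} (hw : Tendsto un atTop (𝓝 w)) :
    F w = ⨅ x, F x ∧ Tendsto (fun n => ⨅ x, Fn n x) atTop (𝓝 (F w)) := by
  have hlower : F w ≤ liminf (fun n => ⨅ x, Fn n x) atTop :=
    (h w un hw).trans (EReal.liminf_le_liminf_of_tendsto_sub_zero hmin)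
  have hupper : limsup (fun n => ⨅ x, Fn n x) atTop ≤ ⨅ x, F x :=
    limsup_iInf_le_iInf_of_recovery hrec
  have hFw : F w = ⨅ x, F x :=
    le_antisymm (hlower.trans (le_trans liminf_le_limsup hupper)) (iInf_le _ _)
  exact ⟨hFw, tendsto_of_le_liminf_of_limsup_le hlower (hupper.trans_eq hFw.symm)⟩

end GammaLiminfInequality

theorem gamma_convergence_fundamental_general {X : Type*} [MetricSpace X]
    (Fn : ℕ → X → EReal) (F : X → EReal)
    (hliminf : ∀ (u : X) (un : ℕ → X), Tendsto un atTop (𝓝 u) →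
      F u ≤ liminf (fun n => Fn n (un n)) atTop)
    (hrecovery : ∀ u : X, ∃ un : ℕ → X, Tendsto un atTop (𝓝 u) ∧
      Tendsto (fun n => Fn n (un n)) atTop (𝓝 (F u)))
    (un : ℕ → X) (φ : ℕ → ℕ) (hφ : StrictMono φ) (v : X)
    (hconv : Tendsto (un ∘ φ) atTop (𝓝 v))
    (hmin : Tendsto (fun n => Fn n (un n) - ⨅ x, Fn n x) atTop (𝓝 0)) :
    (∃ x₀, F x₀ = ⨅ x, F x) ∧
    (∀ w : X, MapClusterPt w atTop un → F w = ⨅ x, F x) ∧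
    Tendsto (fun n => ⨅ x, Fn (φ n) x) atTop (𝓝 (F v)) := by
  have hsubseq : ∀ ψ : ℕ → ℕ, StrictMono ψ → ∀ w, Tendsto (un ∘ ψ) atTop (𝓝 w) →
      F w = ⨅ x, F x ∧ Tendsto (fun k => ⨅ x, Fn (ψ k) x) atTop (𝓝 (F w)) := by
    intro ψ hψ w hw
    have hrec : ∀ u, ∃ xn : ℕ → X, Tendsto (fun k => Fn (ψ k) (xn k)) atTop (𝓝 (F u)) :=
      fun u => let ⟨xn, _, hxn⟩ := hrecovery u; ⟨xn ∘ ψ, hxn.comp hψ.tendsto_atTop⟩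
    exact (GammaLiminfInequality.comp hliminf hψ).eq_iInf_and_tendsto_iInf hrec
      (hmin.comp hψ.tendsto_atTop) hw
  refine ⟨⟨v, (hsubseq φ hφ v hconv).1⟩, fun w hw => ?_, (hsubseq φ hφ v hconv).2⟩
  obtain ⟨ψ, hψ, hwψ⟩ := hw.tendsto_subseq
  exact (hsubseq ψ hψ w hwψ).1

/-- Fundamental theorem of Γ-convergence: if `Fₙ` Γ-converges to `F` on a metric space
`X`, `(uₙ)` has a convergent subsequence and `Fₙ(uₙ) - inf Fₙ → 0`, then `F` attains its
minimum, every cluster point `w` of `(uₙ)` is a minimizer of `F`, and along the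
convergent subsequence `inf Fₙ → min F = F(v)`. -/
theorem gamma_convergence_fundamental {X : Type*} [MetricSpace X]
    (Fn : ℕ → X → EReal) (F : X → EReal)
    (hFbot : ∀ x, F x ≠ ⊥) (hFnbot : ∀ n x, Fn n x ≠ ⊥)
    (hliminf : ∀ (u : X) (un : ℕ → X), Tendsto un atTop (𝓝 u) →
      F u ≤ liminf (fun n => Fn n (un n)) atTop)
    (hrecovery : ∀ u : X, ∃ un : ℕ → X, Tendsto un atTop (𝓝 u) ∧
      Tendsto (fun n => Fn n (un n)) atTop (𝓝 (F u)))
    (un : ℕ → X) (φ : ℕ → ℕ) (hφ : StrictMono φ) (v : X)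
    (hconv : Tendsto (un ∘ φ) atTop (𝓝 v))
    (hmin : Tendsto (fun n => Fn n (un n) - ⨅ x, Fn n x) atTop (𝓝 0)) :
    (∃ x₀, F x₀ = ⨅ x, F x) ∧
    (∀ w : X, MapClusterPt w atTop un → F w = ⨅ x, F x) ∧
    Tendsto (fun n => ⨅ x, Fn (φ n) x) atTop (𝓝 (F v)) :=
  gamma_convergence_fundamental_general Fn F hliminf hrecovery un φ hφ v hconv hmin
end
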